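/- arXiv:1110.5826 — 3 statements merged into one kernel-verified Lean document; each statement's English description precedes it below -/
import Mathlib

section
/- With parameters r ∈ ℤ₊ and γ ∈ (0,1), the probability π_bad that a randomly shifted dyadic cube I+β is bad satisfies π_bad ≤ 4n·2^{-rγ}/(1 − 2^{-γ}). In particular, if r is chosen large enough that 4n·2^{-rγ} < 1 − 2^{-γ}, then π_good := 1 − π_bad > 0. -/
open MeasureTheory Set ProbabilityTheory

noncomputable section

/-- The (shifted) dyadic cube of generation `j` (sidelength `2^(-j)`) at position `q`,
translated by the vector `v`. -/
def dyCube {n : ℕ} (j : ℤ) (q : Fin n → ℤ) (v : Fin n → ℝ) : Set (Fin n → ℝ) :=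
  Set.univ.pi fun i => Set.Ico ((2:ℝ)^(-j) * q i + v i) ((2:ℝ)^(-j) * (q i + 1) + v i)

/-- The translation vector `∑_{i : 2^{-i} < 2^{-j}} 2^{-i} β_i` determining the position of the
shift of a cube of generation `j` by the shift parameter `β`. -/
def shiftVec {n : ℕ} (j : ℤ) (β : ℤ → Fin n → Fin 2) : Fin n → ℝ :=
  fun i => ∑' k : ℤ, if j < k then (2:ℝ)^(-k) * ((β k i : ℕ) : ℝ) else 0

/-- Distance between two sets in `ℝ^n`. -/
def setDist {n : ℕ} (s t : Set (Fin n → ℝ)) : ℝ :=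
  (⨅ x ∈ s, EMetric.infEdist x t).toReal

/-- The cube `I + β` of generation `j` at position `q` is "bad" with parameters `r, γ` in the
shifted dyadic system `𝒟^β`: some dyadic ancestor `J = (I+β)^(k)`, `k ≥ r`, satisfies
`dist(I+β, Jᶜ) ≤ ℓ(I)^γ ℓ(J)^(1-γ)`. -/
def BadCube {n : ℕ} (r : ℕ) (γ : ℝ) (β : ℤ → Fin n → Fin 2) (j : ℤ) (q : Fin n → ℤ) : Prop :=
  ∃ k : ℕ, r ≤ k ∧ ∃ q' : Fin n → ℤ,
    dyCube j q (shiftVec j β) ⊆ dyCube (j - k) q' (shiftVec (j - k) β) ∧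
    setDist (dyCube j q (shiftVec j β)) (dyCube (j - k) q' (shiftVec (j - k) β))ᶜ
      ≤ ((2:ℝ)^(-j)) ^ γ * ((2:ℝ)^(-(j - (k:ℤ)))) ^ (1 - γ)

/-
The `k`-th ancestor `J` of `I + β` is shifted against `I` by `2^(-j) M`, where `M i` is the
integer with binary digits `β (j - t) i`, `t < k`. Hence in each coordinate `I` sits in `J` at
position `(q i - M i) mod 2^k` (in units of `ℓ(I)`), and badness at level `k` forces this position
to lie within `2^(k(1-γ))` of one end. As `M i` is uniformly distributed on `[0, 2^k)`, this has
probability at most `4 · 2^(-kγ)`; union bounds over the `n` coordinates and the levels `k ≥ r`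
and the geometric series give the estimate, and `π_bad < 1` forces `π_good > 0`.
-/

open scoped ENNReal

def shiftOffset {n : ℕ} (β : ℤ → Fin n → Fin 2) (j : ℤ) (k : ℕ) (i : Fin n) : ℕ :=
  finFunctionFinEquiv fun t : Fin k => β (j - t) i

lemma summable_shiftVec_term {n : ℕ} (j : ℤ) (β : ℤ → Fin n → Fin 2) (i : Fin n) :
    Summable fun m : ℤ => if j < m then (2:ℝ)^(-m) * ((β m i : ℕ) : ℝ) else 0 := by
  have hinj : Function.Injective fun t : ℕ => j + 1 + (t : ℤ) := fun a b h => by simpa using h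
  rw [← hinj.summable_iff fun m hm => ?_]
  · refine Summable.of_nonneg_of_le (fun t => ?_) (fun t => ?_)
      ((summable_geometric_two).mul_left ((2:ℝ)^(-(j + 1))))
    · simp only [Function.comp]; split_ifs <;> positivity
    · have : (2:ℝ)^(-(j + 1 + (t:ℤ))) = (2:ℝ)^(-(j + 1)) * (1 / 2) ^ t := by
        rw [neg_add, zpow_add₀ two_ne_zero, zpow_neg (2:ℝ) (t:ℤ), zpow_natCast, one_div, inv_pow]
      have hβ : ((β (j + 1 + t) i : ℕ) : ℝ) ≤ 1 := by exact_mod_cast Nat.lt_succ_iff.mp (β _ i).isLt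
      simp only [Function.comp, if_pos (by omega : j < j + 1 + (t:ℤ)), this]
      exact mul_le_of_le_one_right (by positivity) hβ
  · refine if_neg fun hjm => hm ⟨(m - (j + 1)).toNat, ?_⟩
    simp only; omega

lemma shiftVec_sub_one {n : ℕ} (j : ℤ) (β : ℤ → Fin n → Fin 2) (i : Fin n) :
    shiftVec (j - 1) β i = shiftVec j β i + (2:ℝ)^(-j) * ((β j i : ℕ) : ℝ) := by
  have hsplit : (fun m : ℤ => if j - 1 < m then (2:ℝ)^(-m) * ((β m i : ℕ) : ℝ) else 0) =
      fun m => (if j < m then (2:ℝ)^(-m) * ((β m i : ℕ) : ℝ) else 0) +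
        if m = j then (2:ℝ)^(-j) * ((β j i : ℕ) : ℝ) else 0 := by
    funext m
    rcases lt_trichotomy m j with h | rfl | h
    · simp [show ¬ j - 1 < m by omega, h.not_gt, h.ne]
    · simp
    · simp [show j - 1 < m by omega, h, h.ne']
  rw [shiftVec, hsplit, Summable.tsum_add (summable_shiftVec_term j β i)
    (hasSum_ite_eq j _).summable, tsum_ite_eq]
  rfl

lemma shiftVec_sub_natCast {n : ℕ} (j : ℤ) (k : ℕ) (β : ℤ → Fin n → Fin 2) (i : Fin n) :
    shiftVec (j - k) β i = shiftVec j β i + (2:ℝ)^(-j) * shiftOffset β j k i := by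
  induction k with
  | zero => simp [shiftOffset]
  | succ k ih =>
    rw [Nat.cast_succ, ← sub_sub, shiftVec_sub_one, ih, shiftOffset, shiftOffset,
      finFunctionFinEquiv_apply, finFunctionFinEquiv_apply, Fin.sum_univ_castSucc]
    simp only [Fin.val_castSucc, Fin.val_last]
    rw [show -(j - k) = -j + k by ring, zpow_add₀ two_ne_zero, zpow_natCast]
    push_cast
    ring

lemma inf'_le_setDist_pi_Ico_compl {n : ℕ} [NeZero n] {a b c d : Fin n → ℝ}
    (hab : ∀ i, a i < b i) :
    Finset.univ.inf' Finset.univ_nonempty (fun i => min (a i - c i) (d i - b i)) ≤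
      setDist (univ.pi fun i => Ico (a i) (b i)) (univ.pi fun i => Ico (c i) (d i))ᶜ := by
  set ε := Finset.univ.inf' Finset.univ_nonempty (fun i => min (a i - c i) (d i - b i))
  have hε : ∀ i, ε ≤ a i - c i ∧ ε ≤ d i - b i := fun i =>
    le_min_iff.mp (Finset.inf'_le _ (Finset.mem_univ i))
  have hcompl : (univ.pi fun i => Ico (c i) (d i))ᶜ.Nonempty :=
    ⟨fun _ => c 0 - 1, fun h => by linarith [(h 0 trivial).1]⟩
  have ha : a ∈ univ.pi fun i => Ico (a i) (b i) := fun i _ => ⟨le_rfl, hab i⟩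
  have hfin : (⨅ x ∈ univ.pi fun i => Ico (a i) (b i),
      Metric.infEDist x (univ.pi fun i => Ico (c i) (d i))ᶜ) ≠ ⊤ :=
    ne_top_of_le_ne_top (Metric.infEDist_ne_top hcompl) (biInf_le _ ha)
  refine (ENNReal.ofReal_le_iff_le_toReal hfin).mp (le_iInf₂ fun x hx => ?_)
  refine Metric.le_infEDist.mpr fun y hy => ?_
  obtain ⟨i, -, hyi⟩ := not_forall₂.mp hy
  have hxi := hx i trivial
  have hdist : ε ≤ dist x y := by
    refine le_trans ?_ ((Real.dist_eq _ _).symm.trans_le (dist_le_pi_dist x y i))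
    rcases not_and_or.mp hyi with h | h
    · linarith [(hε i).1, le_abs_self (x i - y i), hxi.1, not_le.mp h]
    · linarith [(hε i).2, neg_le_abs (x i - y i), hxi.2, not_lt.mp h]
  rw [edist_dist]
  exact ENNReal.ofReal_le_ofReal hdist

lemma exists_near_boundary_of_setDist_le {n : ℕ} [NeZero n] {a b c d : Fin n → ℝ} {δ : ℝ}
    (hab : ∀ i, a i < b i)
    (hδ : setDist (univ.pi fun i => Ico (a i) (b i)) (univ.pi fun i => Ico (c i) (d i))ᶜ ≤ δ) :
    ∃ i, a i - c i ≤ δ ∨ d i - b i ≤ δ := by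
  obtain ⟨i, -, hi⟩ := (Finset.inf'_le_iff _).mp ((inf'_le_setDist_pi_Ico_compl hab).trans hδ)
  exact ⟨i, min_le_iff.mp hi⟩

-- Positions `x ∈ [0, N)` of a cell in a row of `N` cells with at most `T` cells on one side.
def nearEnds (N : ℤ) (T : ℝ) : Finset ℤ :=
  {x ∈ Finset.Ico 0 N | (x : ℝ) ≤ T ∨ ((N - 1 - x : ℤ) : ℝ) ≤ T}

lemma card_nearEnds_le (N : ℤ) {T : ℝ} (hT : 1 ≤ T) : ((nearEnds N T).card : ℝ) ≤ 4 * T := by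
  have hsub : nearEnds N T ⊆ Finset.Icc 0 ⌊T⌋ ∪ Finset.Icc (N - 1 - ⌊T⌋) (N - 1) := by
    intro x hx
    simp only [nearEnds, Finset.mem_filter, Finset.mem_Ico] at hx
    obtain ⟨⟨hx0, hxN⟩, hx | hx⟩ := hx <;> rw [← Int.le_floor] at hx <;>
      simp only [Finset.mem_union, Finset.mem_Icc] <;> omega
  have hcard : (nearEnds N T).card ≤ 2 * (⌊T⌋ + 1).toNat := by
    calc (nearEnds N T).card ≤ _ := Finset.card_le_card hsub
      _ ≤ _ := Finset.card_union_le _ _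
      _ = 2 * (⌊T⌋ + 1).toNat := by rw [Int.card_Icc, Int.card_Icc]; omega
  have hfloor : ((⌊T⌋ + 1).toNat : ℝ) = ⌊T⌋ + 1 := by
    rw [← Int.cast_natCast, Int.toNat_of_nonneg (by positivity)]; push_cast; ring
  calc ((nearEnds N T).card : ℝ) ≤ 2 * (⌊T⌋ + 1).toNat := by exact_mod_cast hcard
    _ ≤ 4 * T := by rw [hfloor]; linarith [Int.floor_le T]

lemma exists_residue_mem_nearEnds_of_setDist_le {n : ℕ} [NeZero n] {β : ℤ → Fin n → Fin 2} {j : ℤ}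
    {q q' : Fin n → ℤ} {k : ℕ} {T : ℝ}
    (hsub : dyCube j q (shiftVec j β) ⊆ dyCube (j - k) q' (shiftVec (j - k) β))
    (hdist : setDist (dyCube j q (shiftVec j β)) (dyCube (j - k) q' (shiftVec (j - k) β))ᶜ
      ≤ (2:ℝ)^(-j) * T) :
    ∃ i, (q i - shiftOffset β j k i) % 2^k ∈ nearEnds (2^k) T := by
  have hh : (0:ℝ) < 2^(-j) := by positivity
  set L : Fin n → ℤ := fun i => q i - 2^k * q' i - shiftOffset β j k i
  have hscale : (2:ℝ)^(-(j - k)) = 2^(-j) * 2^k := by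
    rw [neg_sub, sub_eq_neg_add, zpow_add₀ two_ne_zero, zpow_natCast]
  have hlower : ∀ i, ((2:ℝ)^(-j) * q i + shiftVec j β i) -
      ((2:ℝ)^(-(j - k)) * q' i + shiftVec (j - k) β i) = 2^(-j) * (L i : ℝ) := fun i => by
    rw [hscale, shiftVec_sub_natCast]; simp only [L]; push_cast; ring
  have hupper : ∀ i, ((2:ℝ)^(-(j - k)) * (q' i + 1) + shiftVec (j - k) β i) -
      ((2:ℝ)^(-j) * (q i + 1) + shiftVec j β i) = 2^(-j) * ((2^k - 1 - L i : ℤ) : ℝ) :=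
    fun i => by rw [hscale, shiftVec_sub_natCast]; simp only [L]; push_cast; ring
  have hab : ∀ i, (2:ℝ)^(-j) * q i + shiftVec j β i < 2^(-j) * (q i + 1) + shiftVec j β i :=
    fun i => by linarith
  have hL : ∀ i, 0 ≤ L i ∧ L i < 2^k := fun i => by
    obtain ⟨hc, hd⟩ := (Set.Ico_subset_Ico_iff (hab i)).mp <|
      (Set.univ_pi_subset_univ_pi_iff.mp hsub).resolve_right
        (fun ⟨i, hi⟩ => (Set.nonempty_Ico.mpr (hab i)).ne_empty hi) i
    have h1 : (0:ℝ) ≤ L i := nonneg_of_mul_nonneg_right (by linarith [hlower i]) hh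
    have h2 : (0:ℝ) ≤ ((2^k - 1 - L i : ℤ) : ℝ) :=
      nonneg_of_mul_nonneg_right (by linarith [hupper i]) hh
    have h2' : (0:ℤ) ≤ 2^k - 1 - L i := by exact_mod_cast h2
    exact ⟨by exact_mod_cast h1, by linarith⟩
  have hres : ∀ i, (q i - shiftOffset β j k i) % 2^k = L i := fun i => by
    rw [show q i - shiftOffset β j k i = L i + 2^k * q' i by ring, Int.add_mul_emod_self_left,
      Int.emod_eq_of_lt (hL i).1 (hL i).2]
  obtain ⟨i, hi⟩ := exists_near_boundary_of_setDist_le hab hdist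
  refine ⟨i, ?_⟩
  rw [hres, nearEnds, Finset.mem_filter, Finset.mem_Ico]
  rw [hlower, hupper, mul_le_mul_iff_right₀ hh, mul_le_mul_iff_right₀ hh] at hi
  exact ⟨hL i, hi⟩

/-- The cube `I + β` of generation `j` lies within `ℓ(I)^γ ℓ(J)^(1-γ) = ℓ(I) 2^(k(1-γ))` of the
boundary of its `k`-th ancestor `J` in some coordinate, the position of `I` inside `J` being the
residue `(q i - shiftOffset β j k i) mod 2^k` in units of `ℓ(I)`. -/
def NearAncestorBoundary {n : ℕ} (γ : ℝ) (β : ℤ → Fin n → Fin 2) (j : ℤ) (q : Fin n → ℤ)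
    (k : ℕ) : Prop :=
  ∃ i, (q i - shiftOffset β j k i) % 2^k ∈ nearEnds (2^k) ((2:ℝ)^((k:ℝ) * (1 - γ)))

lemma BadCube.exists_nearAncestorBoundary {n r : ℕ} [NeZero n] {γ : ℝ}
    {β : ℤ → Fin n → Fin 2} {j : ℤ} {q : Fin n → ℤ} (hbad : BadCube r γ β j q) :
    ∃ k, r ≤ k ∧ NearAncestorBoundary γ β j q k := by
  obtain ⟨k, hk, q', hsub, hdist⟩ := hbad
  have hthreshold : ((2:ℝ)^(-j))^γ * ((2:ℝ)^(-(j - k)))^(1 - γ) =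
      2^(-j) * 2^((k:ℝ) * (1 - γ)) := by
    simp only [← Real.rpow_intCast, ← Real.rpow_mul two_pos.le, ← Real.rpow_add two_pos]
    push_cast
    ring_nf
  exact ⟨k, hk, exists_residue_mem_nearEnds_of_setDist_le hsub (hthreshold ▸ hdist)⟩

section Probability

variable {Ω : Type*} [MeasurableSpace Ω] {P : Measure Ω} {n : ℕ} {B : ℤ → Ω → Fin n → Fin 2}

lemma measure_coord_eq_le (hunif : ∀ k s, P {ω | B k ω = s} = 1 / 2 ^ n) (m : ℤ) (i : Fin n)
    (b : Fin 2) : P {ω | B m ω i = b} ≤ 2⁻¹ := by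
  have hfiber : {ω | B m ω i = b} = ⋃ v ∈ Finset.univ.filter (fun v : Fin n → Fin 2 => v i = b),
      {ω | B m ω = v} := by
    ext ω; simp
  have hcard : (Finset.univ.filter (fun v : Fin n → Fin 2 => v i = b)).card = 2 ^ (n - 1) := by
    simpa using Fintype.card_filter_piFinset_const (Finset.univ : Finset (Fin 2)) i b
  obtain ⟨p, rfl⟩ : ∃ p, n = p + 1 := ⟨n - 1, by have := i.pos; omega⟩
  calc P {ω | B m ω i = b}
      ≤ ∑ v ∈ Finset.univ.filter (fun v : Fin (p + 1) → Fin 2 => v i = b), P {ω | B m ω = v} :=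
        hfiber ▸ measure_biUnion_finset_le _ _
    _ = 2 ^ p * (1 / 2 ^ (p + 1)) := by simp [hunif, hcard]
    _ = 2⁻¹ := by
        rw [pow_succ, one_div, ENNReal.mul_inv (by simp) (by simp), ← mul_assoc,
          ENNReal.mul_inv_cancel (by simp) (by simp), one_mul]

lemma measure_digits_eq_le (hindep : iIndepFun B P)
    (hunif : ∀ k s, P {ω | B k ω = s} = 1 / 2 ^ n) (j : ℤ) (k : ℕ) (i : Fin n)
    (c : Fin k → Fin 2) : P {ω | ∀ t : Fin k, B (j - t) ω i = c t} ≤ 2⁻¹ ^ k := by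
  have hinj : Function.Injective fun t : Fin k => j - (t : ℕ) := fun s t h => by
    simpa [Fin.val_inj] using h
  have hindep' : iIndepFun (fun t : Fin k => B (j - t)) P := hindep.precomp hinj
  have hprod : P (⋂ t : Fin k, {ω | B (j - t) ω i = c t}) =
      ∏ t : Fin k, P {ω | B (j - t) ω i = c t} :=
    hindep'.meas_iInter fun t => ⟨{v | v i = c t}, .of_discrete, rfl⟩
  rw [Set.ofPred_forall, hprod]
  calc ∏ t : Fin k, P {ω | B (j - t) ω i = c t} ≤ ∏ _t : Fin k, (2⁻¹ : ℝ≥0∞) :=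
        Finset.prod_le_prod' fun t _ => measure_coord_eq_le hunif _ i _
    _ = 2⁻¹ ^ k := by simp

lemma measure_shiftOffset_eq_le (hindep : iIndepFun B P)
    (hunif : ∀ k s, P {ω | B k ω = s} = 1 / 2 ^ n) (j : ℤ) (k : ℕ) (i : Fin n) (y : ℤ) :
    P {ω | (shiftOffset (fun m => B m ω) j k i : ℤ) = y} ≤ 2⁻¹ ^ k := by
  rcases Set.eq_empty_or_nonempty {ω | (shiftOffset (fun m => B m ω) j k i : ℤ) = y}
    with hempty | ⟨ω₀, hω₀⟩
  · simp [hempty]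
  calc _ ≤ P {ω | ∀ t : Fin k, B (j - t) ω i = B (j - t) ω₀ i} := measure_mono fun ω hω t => ?_
    _ ≤ 2⁻¹ ^ k := measure_digits_eq_le hindep hunif j k i _
  exact congrFun (finFunctionFinEquiv.injective <| Fin.val_injective <|
    Nat.cast_injective (R := ℤ) (hω.trans hω₀.symm)) t

lemma measure_residue_mem_le (hindep : iIndepFun B P)
    (hunif : ∀ k s, P {ω | B k ω = s} = 1 / 2 ^ n) (j : ℤ) (k : ℕ) (i : Fin n) (q : ℤ)
    (S : Finset ℤ) :
    P {ω | (q - shiftOffset (fun m => B m ω) j k i) % 2^k ∈ S} ≤ S.card * 2⁻¹ ^ k := by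
  have hsub : {ω | (q - shiftOffset (fun m => B m ω) j k i) % 2^k ∈ S} ⊆
      ⋃ x ∈ S, {ω | (shiftOffset (fun m => B m ω) j k i : ℤ) = (q - x) % 2^k} := by
    intro ω hω
    refine Set.mem_biUnion hω ?_
    set M : ℤ := (shiftOffset (fun m => B m ω) j k i : ℤ)
    have hM : M < 2^k := by
      have := (finFunctionFinEquiv fun t : Fin k => B (j - t) ω i).isLt
      simp only [M, shiftOffset]
      exact_mod_cast this
    have hmod : (q - (q - M) % 2^k) ≡ M [ZMOD 2^k] := by
      simpa using ((Int.mod_modEq (q - M) (2^k)).sub_left q)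
    exact (Int.emod_eq_of_lt (by positivity) hM).symm.trans hmod.symm
  calc _ ≤ ∑ x ∈ S, P {ω | (shiftOffset (fun m => B m ω) j k i : ℤ) = (q - x) % 2^k} :=
        (measure_mono hsub).trans (measure_biUnion_finset_le _ _)
    _ ≤ ∑ _x ∈ S, (2⁻¹ : ℝ≥0∞) ^ k :=
        Finset.sum_le_sum fun x _ => measure_shiftOffset_eq_le hindep hunif j k i _
    _ = S.card * 2⁻¹ ^ k := by rw [Finset.sum_const, nsmul_eq_mul]

lemma measure_nearAncestorBoundary_le (hindep : iIndepFun B P)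
    (hunif : ∀ k s, P {ω | B k ω = s} = 1 / 2 ^ n) {γ : ℝ} (hγ : γ ≤ 1) (j : ℤ)
    (q : Fin n → ℤ) (k : ℕ) :
    P {ω | NearAncestorBoundary γ (fun m => B m ω) j q k} ≤
      ENNReal.ofReal (4 * n * (2:ℝ)^(-(k:ℝ) * γ)) := by
  set T : ℝ := (2:ℝ)^((k:ℝ) * (1 - γ))
  have hT : 1 ≤ T := Real.one_le_rpow one_le_two (mul_nonneg k.cast_nonneg (sub_nonneg.mpr hγ))
  have hpow : (2⁻¹ : ℝ≥0∞) ^ k = ENNReal.ofReal ((2:ℝ)^(-(k:ℝ))) := by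
    rw [Real.rpow_neg two_pos.le, Real.rpow_natCast, ENNReal.ofReal_inv_of_pos (by positivity),
      ENNReal.ofReal_pow zero_le_two, ENNReal.ofReal_ofNat, ENNReal.inv_pow]
  have hcoord : ∀ i, P {ω | (q i - shiftOffset (fun m => B m ω) j k i) % 2^k ∈ nearEnds (2^k) T}
      ≤ ENNReal.ofReal (4 * (2:ℝ)^(-(k:ℝ) * γ)) := fun i => calc
    _ ≤ ((nearEnds (2^k) T).card : ℝ≥0∞) * 2⁻¹ ^ k := measure_residue_mem_le hindep hunif j k i _ _
    _ ≤ ENNReal.ofReal (4 * T) * ENNReal.ofReal ((2:ℝ)^(-(k:ℝ))) := by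
        rw [hpow, ← ENNReal.ofReal_natCast]
        gcongr
        exact card_nearEnds_le _ hT
    _ = ENNReal.ofReal (4 * (2:ℝ)^(-(k:ℝ) * γ)) := by
        rw [← ENNReal.ofReal_mul (by positivity), mul_assoc, ← Real.rpow_add two_pos]
        ring_nf
  calc P {ω | NearAncestorBoundary γ (fun m => B m ω) j q k}
      = P (⋃ i, {ω | (q i - shiftOffset (fun m => B m ω) j k i) % 2^k ∈ nearEnds (2^k) T}) := by
        simp only [NearAncestorBoundary, Set.ofPred_exists]; rfl
    _ ≤ ∑ i, P {ω | (q i - shiftOffset (fun m => B m ω) j k i) % 2^k ∈ nearEnds (2^k) T} :=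
        measure_iUnion_fintype_le _ _
    _ ≤ ∑ _i : Fin n, ENNReal.ofReal (4 * (2:ℝ)^(-(k:ℝ) * γ)) :=
        Finset.sum_le_sum fun i _ => hcoord i
    _ = ENNReal.ofReal (4 * n * (2:ℝ)^(-(k:ℝ) * γ)) := by
        rw [Finset.sum_const, Finset.card_univ, Fintype.card_fin, nsmul_eq_mul,
          ← ENNReal.ofReal_natCast, ← ENNReal.ofReal_mul (by positivity)]
        ring_nf

end Probability

lemma tsum_ofReal_mul_two_rpow_tail {c γ : ℝ} (hc : 0 ≤ c) (hγ : 0 < γ) (r : ℕ) :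
    ∑' t : ℕ, ENNReal.ofReal (c * (2:ℝ)^(-((r + t : ℕ) : ℝ) * γ)) =
      ENNReal.ofReal (c * (2:ℝ)^(-(r:ℝ) * γ) / (1 - (2:ℝ)^(-γ))) := by
  have hρ : (2:ℝ)^(-γ) < 1 := Real.rpow_lt_one_of_one_lt_of_neg one_lt_two (neg_lt_zero.mpr hγ)
  have hterm : ∀ t : ℕ, c * (2:ℝ)^(-((r + t : ℕ) : ℝ) * γ) =
      c * (2:ℝ)^(-(r:ℝ) * γ) * ((2:ℝ)^(-γ)) ^ t := fun t => by
    rw [← Real.rpow_natCast, ← Real.rpow_mul two_pos.le, mul_assoc, ← Real.rpow_add two_pos]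
    push_cast
    ring_nf
  simp_rw [hterm]
  rw [← ENNReal.ofReal_tsum_of_nonneg (fun t => by positivity)
      ((summable_geometric_of_lt_one (by positivity) hρ).mul_left _),
    tsum_mul_left, tsum_geometric_of_lt_one (by positivity) hρ, div_eq_mul_inv]

theorem statement1_general
    (n : ℕ) (hn : 1 ≤ n) (γ : ℝ) (hγ : γ ∈ Set.Ioo (0:ℝ) 1) (r : ℕ)
    {Ω : Type*} [MeasurableSpace Ω] (P : Measure Ω) [IsProbabilityMeasure P]
    (B : ℤ → Ω → (Fin n → Fin 2))
    (hindep : iIndepFun B P)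
    (hunif : ∀ k s, P {ω | B k ω = s} = 1 / 2 ^ n)
    (j : ℤ) (q : Fin n → ℤ) :
    P {ω | BadCube r γ (fun i => B i ω) j q}
        ≤ ENNReal.ofReal (4 * (n:ℝ) * (2:ℝ) ^ (-(r:ℝ) * γ) / (1 - (2:ℝ) ^ (-γ))) ∧
    (4 * (n:ℝ) * (2:ℝ) ^ (-(r:ℝ) * γ) < 1 - (2:ℝ) ^ (-γ) →
      0 < P {ω | ¬ BadCube r γ (fun i => B i ω) j q}) := by
  have : NeZero n := ⟨by omega⟩
  have hbad : P {ω | BadCube r γ (fun i => B i ω) j q}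
      ≤ ENNReal.ofReal (4 * (n:ℝ) * (2:ℝ) ^ (-(r:ℝ) * γ) / (1 - (2:ℝ) ^ (-γ))) := calc
    _ ≤ P (⋃ t : ℕ, {ω | NearAncestorBoundary γ (fun m => B m ω) j q (r + t)}) :=
        measure_mono fun ω hω => by
          obtain ⟨k, hk, hnear⟩ := BadCube.exists_nearAncestorBoundary hω
          exact Set.mem_iUnion.mpr ⟨k - r, by rwa [Nat.add_sub_cancel' hk]⟩
    _ ≤ ∑' t : ℕ, ENNReal.ofReal (4 * n * (2:ℝ)^(-((r + t : ℕ) : ℝ) * γ)) :=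
        (measure_iUnion_le _).trans <| ENNReal.tsum_le_tsum fun t =>
          measure_nearAncestorBoundary_le hindep hunif hγ.2.le j q (r + t)
    _ = _ := tsum_ofReal_mul_two_rpow_tail (by positivity) hγ.1 r
  refine ⟨hbad, fun hsmall => pos_iff_ne_zero.mpr fun hgood => ?_⟩
  have hlt : P {ω | BadCube r γ (fun i => B i ω) j q} < 1 :=
    hbad.trans_lt <| ENNReal.ofReal_lt_one.mpr <|
      (div_lt_one (hsmall.trans_le' (by positivity))).mpr hsmall
  have hcover := measure_univ_le_add_compl (μ := P) {ω | BadCube r γ (fun i => B i ω) j q}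
  rw [measure_univ, Set.compl_ofPred, hgood, add_zero] at hcover
  exact hlt.not_ge hcover

/-- with parameters `r ∈ ℤ₊` and `γ ∈ (0,1)`, the probability `π_bad` that a
randomly shifted dyadic cube `I+β` is bad satisfies `π_bad ≤ 4n·2^(-rγ)/(1-2^(-γ))`; in
particular, if `4n·2^(-rγ) < 1 - 2^(-γ)`, then `π_good = 1 - π_bad > 0`. -/
theorem statement1
    (n : ℕ) (hn : 1 ≤ n) (γ : ℝ) (hγ : γ ∈ Set.Ioo (0:ℝ) 1) (r : ℕ) (hr : 1 ≤ r)
    {Ω : Type*} [MeasurableSpace Ω] (P : Measure Ω) [IsProbabilityMeasure P]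
    (B : ℤ → Ω → (Fin n → Fin 2))
    (hmeas : ∀ k, Measurable (B k))
    (hindep : iIndepFun B P)
    (hunif : ∀ k s, P {ω | B k ω = s} = 1 / 2 ^ n)
    (j : ℤ) (q : Fin n → ℤ) :
    P {ω | BadCube r γ (fun i => B i ω) j q}
        ≤ ENNReal.ofReal (4 * (n:ℝ) * (2:ℝ) ^ (-(r:ℝ) * γ) / (1 - (2:ℝ) ^ (-γ))) ∧
    (4 * (n:ℝ) * (2:ℝ) ^ (-(r:ℝ) * γ) < 1 - (2:ℝ) ^ (-γ) →
      0 < P {ω | ¬ BadCube r γ (fun i => B i ω) j q}) :=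
  statement1_general n hn γ hγ r P B hindep hunif j q

end
end

section
/- Let I, J be good cubes in a dyadic system D with ℓ(I) < ℓ(J), and suppose a(I) = a(J), where a(K) := log₂ℓ(K) mod (M+1) and M := max{r, ⌈(1−γ)^{-1} log₂⁺|m|⌉} for a fixed m ∈ ℤ^n. If I intersects J ∪ (J∔m) (where K∔m := K + ℓ(K)m), then both I and I∔m are contained in a single dyadic subcube K of J or of J∔m with ℓ(K) = ℓ(J)/2. Consequently any two distinct good cubes with equal values of a and of the alternating orbit-label b are m-compatible: either I∪(I∔m) and J∪(J∔m) are disjoint, or one of these unions is contained in a dyadic subcube of a cube from the other pair. -/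
open MeasureTheory Set ProbabilityTheory

noncomputable section

/-!
Every shifted dyadic system `𝒟^β` is nested: since `shiftVec (j - 1) β - shiftVec j β = 2^(-j) β_j`
is an integer multiple of the sidelength `2^(-j)`, a cube of generation `j` lies in exactly one
cube of each coarser generation. If `ℓ(I) < ℓ(J)` and `a(I) = a(J)`, then `ℓ(J) ≥ 2^(M+1) ℓ(I)`,
so the ancestor `K` of `I` with `ℓ(K) = ℓ(J)/2` has order `k ≥ M ≥ r`. Goodness of `I` gives
`dist(I, Kᶜ) > ℓ(I)^γ ℓ(K)^(1-γ) = 2^((1-γ)k) ℓ(I) ≥ |m| ℓ(I)`, while every point of `I∔m` is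
within `|m| ℓ(I)` of a point of `I`; hence `I ∪ (I∔m) ⊆ K`, and by nestedness `K` is a child of
whichever of `J`, `J∔m` it meets. For cubes of equal size, `b` alternates along `q ↦ q + m`, so
equal labels rule out `qI = qJ ± m` and the four cubes are distinct cubes of one grid.
-/

namespace DyadicCube

variable {n : ℕ}

lemma mem_dyCube_iff {j : ℤ} {q : Fin n → ℤ} {v x : Fin n → ℝ} :
    x ∈ dyCube j q v ↔ ∀ i, ⌊(x i - v i) * (2:ℝ) ^ j⌋ = q i := by
  have h2j : (0:ℝ) < 2 ^ j := zpow_pos two_pos j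
  simp only [dyCube, Set.mem_pi, Set.mem_univ, Set.mem_Ico, true_imp_iff, Int.floor_eq_iff]
  refine forall_congr' fun i => ?_
  rw [zpow_neg, ← div_le_iff₀ h2j, ← lt_div_iff₀ h2j, div_eq_inv_mul, div_eq_inv_mul,
    le_sub_iff_add_le, sub_lt_iff_lt_add]

lemma eq_of_mem_dyCube {j : ℤ} {q q' : Fin n → ℤ} {v x : Fin n → ℝ}
    (h : x ∈ dyCube j q v) (h' : x ∈ dyCube j q' v) : q = q' :=
  funext fun i => (mem_dyCube_iff.1 h i).symm.trans (mem_dyCube_iff.1 h' i)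

lemma disjoint_dyCube {j : ℤ} {q q' : Fin n → ℤ} {v : Fin n → ℝ} (h : q ≠ q') :
    Disjoint (dyCube j q v) (dyCube j q' v) :=
  Set.disjoint_left.2 fun _ hx hx' => h (eq_of_mem_dyCube hx hx')

lemma mem_dyCube_add_iff {j : ℤ} {q m : Fin n → ℤ} {v y : Fin n → ℝ} :
    y ∈ dyCube j (q + m) v ↔ y - (2:ℝ) ^ (-j) • (fun i => (m i : ℝ)) ∈ dyCube j q v := by
  simp only [mem_dyCube_iff]
  refine forall_congr' fun i => ?_
  have : (y i - (2:ℝ) ^ (-j) * m i - v i) * 2 ^ j = (y i - v i) * 2 ^ j - m i := by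
    rw [zpow_neg]
    field_simp
    ring
  simp only [Pi.sub_apply, Pi.smul_apply, smul_eq_mul, Pi.add_apply, this, Int.floor_sub_intCast]
  omega

lemma dyCube_subset_dyCube_sub_one {j : ℤ} (q e : Fin n → ℤ) {v v' : Fin n → ℝ}
    (hv : ∀ i, v' i = v i + (2:ℝ) ^ (-j) * e i) :
    dyCube j q v ⊆ dyCube (j - 1) (fun i => (q i - e i) / 2) v' := by
  intro x hx
  rw [mem_dyCube_iff] at hx ⊢
  intro i
  have : (x i - v' i) * (2:ℝ) ^ (j - 1) = ((x i - v i) * 2 ^ j - e i) / ((2 : ℕ) : ℝ) := by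
    rw [hv, zpow_sub_one₀ two_ne_zero, zpow_neg]
    field_simp
    ring
  rw [this, Int.floor_div_natCast, Int.floor_sub_intCast, hx]
  rfl

lemma summable_shiftVec_term (β : ℤ → Fin n → Fin 2) (j : ℤ) (i : Fin n) :
    Summable fun k : ℤ => if j < k then (2:ℝ) ^ (-k) * ((β k i : ℕ) : ℝ) else 0 := by
  apply Summable.of_nat_of_neg
  · refine Summable.of_nonneg_of_le (fun k => ?_) (fun k => ?_) summable_geometric_two
    · split_ifs <;> positivity
    · have hβ : ((β k i : ℕ) : ℝ) ≤ 1 := by exact_mod_cast Nat.le_of_lt_succ (β k i).isLt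
      split_ifs
      · calc (2:ℝ) ^ (-(k:ℤ)) * ((β k i : ℕ) : ℝ) ≤ 2 ^ (-(k:ℤ)) * 1 := by gcongr
          _ = (1 / 2) ^ k := by rw [mul_one, zpow_neg, zpow_natCast, one_div, inv_pow]
      · positivity
  · refine summable_of_ne_finset_zero (s := Finset.range (-j).toNat) fun k hk => ?_
    rw [Finset.mem_range, not_lt] at hk
    rw [if_neg (by omega)]

lemma shiftVec_sub_one (β : ℤ → Fin n → Fin 2) (j : ℤ) (i : Fin n) :
    shiftVec (j - 1) β i = shiftVec j β i + (2:ℝ) ^ (-j) * ((β j i : ℕ) : ℝ) := by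
  have hsplit : (fun k : ℤ => if j - 1 < k then (2:ℝ) ^ (-k) * ((β k i : ℕ) : ℝ) else 0) =
      fun k => (if j < k then (2:ℝ) ^ (-k) * ((β k i : ℕ) : ℝ) else 0) +
        if k = j then (2:ℝ) ^ (-k) * ((β k i : ℕ) : ℝ) else 0 := by
    funext k
    split_ifs <;> first | omega | simp_all
  rw [shiftVec, hsplit, Summable.tsum_add (summable_shiftVec_term β j i) (summable_of_ne_finset_zero
    (s := {j}) fun k hk => if_neg (by simpa using hk)), tsum_ite_eq, shiftVec]

variable (β : ℤ → Fin n → Fin 2) (m : Fin n → ℤ)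

abbrev cube (j : ℤ) (q : Fin n → ℤ) : Set (Fin n → ℝ) := dyCube j q (shiftVec j β)

/-- `I ∪ (I∔m)` for the cube `I` at position `q`: its translate `I∔m = I + ℓ(I) m` is the cube
at position `q + m`. -/
abbrev cubePair (j : ℤ) (q : Fin n → ℤ) : Set (Fin n → ℝ) := cube β j q ∪ cube β j (q + m)

def PairInChild (jI : ℤ) (qI : Fin n → ℤ) (jJ : ℤ) (qJ : Fin n → ℤ) : Prop :=
  ∃ p : Fin n → ℤ,
    (cube β (jJ + 1) p ⊆ cube β jJ qJ ∨ cube β (jJ + 1) p ⊆ cube β jJ (qJ + m)) ∧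
      cubePair β m jI qI ⊆ cube β (jJ + 1) p

variable {β m}

lemma exists_cube_superset {j' j : ℤ} (hj : j' ≤ j) (q : Fin n → ℤ) :
    ∃ p, cube β j q ⊆ cube β j' p := by
  obtain ⟨k, rfl⟩ : ∃ k : ℕ, j' = j - k := ⟨(j - j').toNat, by omega⟩
  clear hj
  induction k with
  | zero => exact ⟨q, by simp⟩
  | succ k ih =>
    obtain ⟨p, hp⟩ := ih
    have hj : j - ((k + 1 : ℕ) : ℤ) = j - k - 1 := by push_cast; ring
    rw [hj]
    exact ⟨_, hp.trans (dyCube_subset_dyCube_sub_one p (fun i => (β (j - k) i : ℕ))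
      fun i => by rw [shiftVec_sub_one]; push_cast; rfl)⟩

lemma cube_subset_of_inter_nonempty {j' j : ℤ} (hj : j' ≤ j) {q p : Fin n → ℤ}
    (h : (cube β j q ∩ cube β j' p).Nonempty) : cube β j q ⊆ cube β j' p := by
  obtain ⟨p', hp'⟩ := exists_cube_superset hj q
  obtain ⟨x, hxq, hxp⟩ := h
  rwa [eq_of_mem_dyCube (hp' hxq) hxp] at hp'

lemma mem_of_dist_le_of_lt_setDist {s t : Set (Fin n → ℝ)} {c : ℝ} (h : c < setDist s tᶜ)
    {x y : Fin n → ℝ} (hx : x ∈ s) (hxy : dist x y ≤ c) : y ∈ t := by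
  by_contra hy
  have : setDist s tᶜ ≤ dist x y :=
    calc setDist s tᶜ ≤ (edist x y).toReal :=
          ENNReal.toReal_mono (edist_ne_top x y)
            ((iInf₂_le x hx).trans (Metric.infEDist_le_edist_of_mem hy))
      _ = dist x y := (dist_edist x y).symm
  linarith

lemma two_zpow_rpow_mul_two_zpow_rpow (γ : ℝ) (j : ℤ) (k : ℕ) :
    ((2:ℝ) ^ (-j)) ^ γ * ((2:ℝ) ^ (-(j - (k:ℤ)))) ^ (1 - γ) =
      2 ^ (-j) * 2 ^ ((1 - γ) * k) := by
  have h2j : (0:ℝ) ≤ 2 ^ (-j) := by positivity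
  rw [show -(j - (k:ℤ)) = -j + k by ring, zpow_add₀ two_ne_zero, zpow_natCast,
    Real.mul_rpow h2j (by positivity), ← mul_assoc, ← Real.rpow_add' h2j (by norm_num),
    add_sub_cancel, Real.rpow_one, mul_comm (1 - γ), Real.rpow_natCast_mul zero_le_two]

variable {r : ℕ} {γ : ℝ}

lemma lt_setDist_of_not_badCube {j : ℤ} {q p : Fin n → ℤ} {k : ℕ}
    (hgood : ¬ BadCube r γ β j q) (hk : r ≤ k) (hK : cube β j q ⊆ cube β (j - k) p) :
    2 ^ (-j) * 2 ^ ((1 - γ) * k) < setDist (cube β j q) (cube β (j - k) p)ᶜ := by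
  rw [← two_zpow_rpow_mul_two_zpow_rpow]
  exact not_le.1 fun hle => hgood ⟨k, hk, p, hK, hle⟩

lemma cubePair_subset_of_not_badCube {j : ℤ} {q p : Fin n → ℤ} {k : ℕ}
    (hgood : ¬ BadCube r γ β j q) (hk : r ≤ k)
    (hm : ‖fun i => (m i : ℝ)‖ ≤ 2 ^ ((1 - γ) * k)) (hK : cube β j q ⊆ cube β (j - k) p) :
    cubePair β m j q ⊆ cube β (j - k) p := by
  have hdist := lt_setDist_of_not_badCube hgood hk hK
  rintro y (hy | hy)
  · exact hK hy
  · refine mem_of_dist_le_of_lt_setDist hdist (mem_dyCube_add_iff.1 hy) ?_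
    rw [dist_comm, dist_self_sub_right, norm_smul, Real.norm_of_nonneg (by positivity)]
    gcongr

lemma le_two_rpow_of_ceil_logb_le {x a : ℝ} {M : ℕ} (ha : 0 < a)
    (h : ⌈a⁻¹ * Real.logb 2 (max 1 x)⌉₊ ≤ M) : x ≤ 2 ^ (a * M) := by
  have hlog : Real.logb 2 (max 1 x) ≤ a * M := by
    rw [← inv_mul_le_iff₀ ha]
    exact (Nat.le_ceil _).trans (Nat.cast_le.2 h)
  calc x ≤ max 1 x := le_max_right _ _
    _ = 2 ^ Real.logb 2 (max 1 x) :=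
      (Real.rpow_logb two_pos one_lt_two.ne' (lt_max_of_lt_left one_pos)).symm
    _ ≤ 2 ^ (a * M) := Real.rpow_le_rpow_of_exponent_le one_le_two hlog

lemma pairInChild_of_not_disjoint {M : ℕ} (hγ : γ < 1) (hrM : r ≤ M)
    (hmM : ‖fun i => (m i : ℝ)‖ ≤ 2 ^ ((1 - γ) * M)) {jI jJ : ℤ} {qI qJ : Fin n → ℤ}
    (hgood : ¬ BadCube r γ β jI qI) (hlt : jJ < jI) (hdvd : ((M : ℤ) + 1) ∣ jI - jJ)
    (hmeet : ¬ Disjoint (cubePair β m jI qI) (cubePair β m jJ qJ)) :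
    PairInChild β m jI qI jJ qJ := by
  have hMk : (M : ℤ) + 1 ≤ jI - jJ := Int.le_of_dvd (by omega) hdvd
  obtain ⟨k, hk⟩ : ∃ k : ℕ, jJ + 1 = jI - k := ⟨(jI - jJ - 1).toNat, by omega⟩
  obtain ⟨p, hp⟩ := exists_cube_superset (β := β) (show jJ + 1 ≤ jI by omega) qI
  have hpair : cubePair β m jI qI ⊆ cube β (jJ + 1) p := by
    rw [hk] at hp ⊢
    refine cubePair_subset_of_not_badCube hgood (by omega) (hmM.trans ?_) hp
    gcongr
    · linarith
    · exact_mod_cast (by omega : M ≤ k)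
  refine ⟨p, ?_, hpair⟩
  obtain ⟨z, hzI, hzJ⟩ := Set.not_disjoint_iff.1 hmeet
  have hzK := hpair hzI
  rcases hzJ with hzJ | hzJ
  · exact Or.inl (cube_subset_of_inter_nonempty (by omega) ⟨z, hzK, hzJ⟩)
  · exact Or.inr (cube_subset_of_inter_nonempty (by omega) ⟨z, hzK, hzJ⟩)

lemma disjoint_cubePair_of_label_eq {α : Type*} {b : (Fin n → ℤ) → α}
    (hb : ∀ q, b (q + m) ≠ b q) {j : ℤ} {q q' : Fin n → ℤ} (hq : q ≠ q') (hbq : b q = b q') :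
    Disjoint (cubePair β m j q) (cubePair β m j q') := by
  have hqm : q + m ≠ q' + m := fun h => hq (add_right_cancel h)
  have hq'm : q ≠ q' + m := fun h => hb q' (by rw [← h]; exact hbq)
  have hqm' : q + m ≠ q' := fun h => hb q (by rw [h]; exact hbq.symm)
  simp only [cubePair, Set.disjoint_union_left, Set.disjoint_union_right]
  exact ⟨⟨disjoint_dyCube hq, disjoint_dyCube hqm'⟩, disjoint_dyCube hq'm, disjoint_dyCube hqm⟩

end DyadicCube

theorem statement4_general
    (n : ℕ) (γ : ℝ) (hγ : γ ∈ Set.Ioo (0:ℝ) 1) (r : ℕ)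
    (m : Fin n → ℤ) (M : ℕ)
    (hM : M = max r ⌈(1 - γ)⁻¹ * Real.logb 2 (max 1 ‖(fun i => (m i : ℝ))‖)⌉₊)
    (β : ℤ → Fin n → Fin 2)
    (b : ℤ → (Fin n → ℤ) → Fin 2) (hb : ∀ j q, b j (q + m) ≠ b j q)
    (jI jJ : ℤ) (qI qJ : Fin n → ℤ)
    (hgoodI : ¬ BadCube r γ β jI qI) (hgoodJ : ¬ BadCube r γ β jJ qJ)
    (ha : ((M : ℤ) + 1) ∣ jI - jJ) :
    -- first claim: a smaller good cube meeting `J ∪ (J∔m)` fits, together with its translate,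
    -- inside a single dyadic child of `J` or of `J∔m`
    (jJ < jI →
      (dyCube jI qI (shiftVec jI β) ∩
        (dyCube jJ qJ (shiftVec jJ β) ∪ dyCube jJ (qJ + m) (shiftVec jJ β))).Nonempty →
      ∃ q'' : Fin n → ℤ,
        (dyCube (jJ + 1) q'' (shiftVec (jJ + 1) β) ⊆ dyCube jJ qJ (shiftVec jJ β) ∨
         dyCube (jJ + 1) q'' (shiftVec (jJ + 1) β) ⊆ dyCube jJ (qJ + m) (shiftVec jJ β)) ∧
        dyCube jI qI (shiftVec jI β) ∪ dyCube jI (qI + m) (shiftVec jI β) ⊆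
          dyCube (jJ + 1) q'' (shiftVec (jJ + 1) β)) ∧
    -- second claim: `m`-compatibility of distinct good cubes with equal labels
    ((jI, qI) ≠ (jJ, qJ) → b jI qI = b jJ qJ →
      (Disjoint
          (dyCube jI qI (shiftVec jI β) ∪ dyCube jI (qI + m) (shiftVec jI β))
          (dyCube jJ qJ (shiftVec jJ β) ∪ dyCube jJ (qJ + m) (shiftVec jJ β)) ∨
       (∃ q'' : Fin n → ℤ,
        (dyCube (jJ + 1) q'' (shiftVec (jJ + 1) β) ⊆ dyCube jJ qJ (shiftVec jJ β) ∨
         dyCube (jJ + 1) q'' (shiftVec (jJ + 1) β) ⊆ dyCube jJ (qJ + m) (shiftVec jJ β)) ∧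
        dyCube jI qI (shiftVec jI β) ∪ dyCube jI (qI + m) (shiftVec jI β) ⊆
          dyCube (jJ + 1) q'' (shiftVec (jJ + 1) β)) ∨
       (∃ q'' : Fin n → ℤ,
        (dyCube (jI + 1) q'' (shiftVec (jI + 1) β) ⊆ dyCube jI qI (shiftVec jI β) ∨
         dyCube (jI + 1) q'' (shiftVec (jI + 1) β) ⊆ dyCube jI (qI + m) (shiftVec jI β)) ∧
        dyCube jJ qJ (shiftVec jJ β) ∪ dyCube jJ (qJ + m) (shiftVec jJ β) ⊆
          dyCube (jI + 1) q'' (shiftVec (jI + 1) β)))) := by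
  have hrM : r ≤ M := hM ▸ le_max_left _ _
  have hmM : ‖fun i => (m i : ℝ)‖ ≤ 2 ^ ((1 - γ) * M) :=
    DyadicCube.le_two_rpow_of_ceil_logb_le (sub_pos.2 hγ.2) (hM ▸ le_max_right _ _)
  refine ⟨fun hlt hmeet => DyadicCube.pairInChild_of_not_disjoint hγ.2 hrM hmM hgoodI hlt ha
    (Set.not_disjoint_iff_nonempty_inter.2
      (hmeet.mono (Set.inter_subset_inter_left _ Set.subset_union_left))), fun hne hbeq => ?_⟩
  by_cases hd : Disjoint (DyadicCube.cubePair β m jI qI) (DyadicCube.cubePair β m jJ qJ)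
  · exact Or.inl hd
  rcases lt_trichotomy jI jJ with hlt | rfl | hlt
  · exact Or.inr (Or.inr (DyadicCube.pairInChild_of_not_disjoint hγ.2 hrM hmM hgoodJ hlt
      (dvd_sub_comm.1 ha) fun h => hd h.symm))
  · exact absurd (DyadicCube.disjoint_cubePair_of_label_eq (hb jI) (by simpa using hne) hbeq) hd
  · exact Or.inr (Or.inl (DyadicCube.pairInChild_of_not_disjoint hγ.2 hrM hmM hgoodI hlt ha hd))

/-- two distinct good cubes `I, J` with equal values of the level-label
`a(K) = log₂ ℓ(K) mod (M+1)` and of the alternating orbit-label `b` are `m`-compatible.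
Moreover, if `ℓ(I) < ℓ(J)`, `a(I) = a(J)` and `I` meets `J ∪ (J∔m)`, then `I ∪ (I∔m)` is
contained in a single dyadic child `K` of `J` or of `J∔m`. -/
theorem statement4
    (n : ℕ) (hn : 1 ≤ n) (γ : ℝ) (hγ : γ ∈ Set.Ioo (0:ℝ) 1) (r : ℕ) (hr : 1 ≤ r)
    (m : Fin n → ℤ) (M : ℕ)
    (hM : M = max r ⌈(1 - γ)⁻¹ * Real.logb 2 (max 1 ‖(fun i => (m i : ℝ))‖)⌉₊)
    (β : ℤ → Fin n → Fin 2)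
    (b : ℤ → (Fin n → ℤ) → Fin 2) (hb : ∀ j q, b j (q + m) ≠ b j q)
    (jI jJ : ℤ) (qI qJ : Fin n → ℤ)
    (hgoodI : ¬ BadCube r γ β jI qI) (hgoodJ : ¬ BadCube r γ β jJ qJ)
    (ha : ((M : ℤ) + 1) ∣ jI - jJ) :
    -- first claim: a smaller good cube meeting `J ∪ (J∔m)` fits, together with its translate,
    -- inside a single dyadic child of `J` or of `J∔m`
    (jJ < jI →
      (dyCube jI qI (shiftVec jI β) ∩
        (dyCube jJ qJ (shiftVec jJ β) ∪ dyCube jJ (qJ + m) (shiftVec jJ β))).Nonempty →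
      ∃ q'' : Fin n → ℤ,
        (dyCube (jJ + 1) q'' (shiftVec (jJ + 1) β) ⊆ dyCube jJ qJ (shiftVec jJ β) ∨
         dyCube (jJ + 1) q'' (shiftVec (jJ + 1) β) ⊆ dyCube jJ (qJ + m) (shiftVec jJ β)) ∧
        dyCube jI qI (shiftVec jI β) ∪ dyCube jI (qI + m) (shiftVec jI β) ⊆
          dyCube (jJ + 1) q'' (shiftVec (jJ + 1) β)) ∧
    -- second claim: `m`-compatibility of distinct good cubes with equal labels
    ((jI, qI) ≠ (jJ, qJ) → b jI qI = b jJ qJ →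
      (Disjoint
          (dyCube jI qI (shiftVec jI β) ∪ dyCube jI (qI + m) (shiftVec jI β))
          (dyCube jJ qJ (shiftVec jJ β) ∪ dyCube jJ (qJ + m) (shiftVec jJ β)) ∨
       (∃ q'' : Fin n → ℤ,
        (dyCube (jJ + 1) q'' (shiftVec (jJ + 1) β) ⊆ dyCube jJ qJ (shiftVec jJ β) ∨
         dyCube (jJ + 1) q'' (shiftVec (jJ + 1) β) ⊆ dyCube jJ (qJ + m) (shiftVec jJ β)) ∧
        dyCube jI qI (shiftVec jI β) ∪ dyCube jI (qI + m) (shiftVec jI β) ⊆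
          dyCube (jJ + 1) q'' (shiftVec (jJ + 1) β)) ∨
       (∃ q'' : Fin n → ℤ,
        (dyCube (jI + 1) q'' (shiftVec (jI + 1) β) ⊆ dyCube jI qI (shiftVec jI β) ∨
         dyCube (jI + 1) q'' (shiftVec (jI + 1) β) ⊆ dyCube jI (qI + m) (shiftVec jI β)) ∧
        dyCube jJ qJ (shiftVec jJ β) ∪ dyCube jJ (qJ + m) (shiftVec jJ β) ⊆
          dyCube (jI + 1) q'' (shiftVec (jI + 1) β)))) :=
  statement4_general n γ hγ r m M hM β b hb jI jJ qI qJ hgoodI hgoodJ ha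

end
end

section
/- Stein's inequality in UMD spaces: let X be a UMD space, p ∈ (1,∞), let (F_j)_{j=1}^N be an increasing sequence of σ-algebras with conditional expectations E_j, let f_1,…,f_N ∈ L^p(Ω;X), and let (ε_j) be independent symmetric ±1-valued random variables on another probability space. Then ‖Σ_j ε_j E_j f_j‖_{L^p} ≤ β_{p,X} ‖Σ_j ε_j f_j‖_{L^p}, where the L^p norms are over the product of the two probability spaces. -/
/-!
Let `𝒢_k` be the σ-algebra on `Ω' × Ω` generated by `ε_i` for `i < ⌈k/2⌉` and by `ℱ_{⌊k/2⌋}`,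
where `ℱ` is made full from time `N` on. Then `G_k = ∑_{i < ⌈k/2⌉} ε_i E_{⌊k/2⌋} f_i` is a
`𝒢`-martingale: on rectangles `A × B` its set integrals are `∑ (∫_A ε_i) (∫_B f_i)`, and
`∫_A ε_i = 0` once `ε_i` is not among the generators of `A`, by independence. Its even increments
are `ε_j E_j f_j` and `G_{2N} = ∑ ε_i f_i`, so twice the left-hand side is the sum of the
transform of `G` by the signs `(-1)^k` and of `G_{2N}` itself, and the UMD inequality bounds both
by `β ‖G_{2N}‖`.

The UMD hypothesis only speaks about sample spaces in `Type`, while `Ω' × Ω` lives in an arbitrary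
universe: by the Doob–Dynkin lemma each `G_k` is a function of countably many `ℕ`-valued
`𝒢_k`-measurable codes, which moves the martingale to the sample space `ℕ → ℕ → ℕ`.
-/

open MeasureTheory Set ProbabilityTheory
open scoped ENNReal

namespace MeasureTheory

theorem StronglyMeasurable.exists_eq_stronglyMeasurable_comp_nat {α X : Type*}
    [TopologicalSpace X] [TopologicalSpace.IsCompletelyMetrizableSpace X] [Nonempty X]
    {m : MeasurableSpace α} {c : α → X} (hc : StronglyMeasurable[m] c) :
    ∃ e : α → ℕ → ℕ, Measurable[m] e ∧ ∃ ψ : (ℕ → ℕ) → X, StronglyMeasurable ψ ∧ c = ψ ∘ e := by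
  choose code hcode using fun n =>
    countable_iff_exists_injOn.1 (hc.approx n).finite_range.countable
  let e : α → ℕ → ℕ := fun ω n => code n (hc.approx n ω)
  have he : Measurable[m] e :=
    measurable_pi_lambda _ fun n => ((hc.approx n).map (code n)).measurable
  suffices hce : StronglyMeasurable[MeasurableSpace.comap e inferInstance] c from
    ⟨e, he, hce.exists_eq_measurable_comp⟩
  refine stronglyMeasurable_of_tendsto _ (fun n => ?_) (tendsto_pi_nhds.2 hc.tendsto_approx)
  have hdecode : ⇑(hc.approx n)
      = Function.invFunOn (code n) (range (hc.approx n)) ∘ (fun s => s n) ∘ e :=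
    funext fun ω => ((hcode n).leftInvOn_invFunOn ⟨ω, rfl⟩).symm
  rw [hdecode]
  exact StronglyMeasurable.of_discrete.comp_measurable
    ((measurable_pi_apply n).comp (comap_measurable e))

theorem Filtration.measurable_piLE_apply {ι : Type*} [Preorder ι] {X : ι → Type*}
    [∀ i, MeasurableSpace (X i)] (i : ι) :
    Measurable[Filtration.piLE (X := X) i] (fun s => s i) :=
  fun _ ht => ⟨_, measurable_pi_apply (⟨i, mem_Iic.2 le_rfl⟩ : Iic i) ht, rfl⟩

theorem Martingale.of_comp {Ω Ω₀ E : Type*} [NormedAddCommGroup E] [NormedSpace ℝ E]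
    [CompleteSpace E] {mΩ : MeasurableSpace Ω} {mΩ₀ : MeasurableSpace Ω₀} {ν : Measure Ω}
    [IsFiniteMeasure ν] {𝒢 : Filtration ℕ mΩ} {𝒢₀ : Filtration ℕ mΩ₀} {g : ℕ → Ω → E}
    {g₀ : ℕ → Ω₀ → E} {Φ : Ω → Ω₀} (hg : Martingale g 𝒢 ν) (hΦ : Measurable Φ)
    (hΦ𝒢 : ∀ k, Measurable[𝒢 k, 𝒢₀ k] Φ) (hg₀ : StronglyAdapted 𝒢₀ g₀)
    (hcomp : ∀ k, g₀ k ∘ Φ = g k) : Martingale g₀ 𝒢₀ (ν.map Φ) := by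
  have hg₀m : ∀ k, AEStronglyMeasurable (g₀ k) (ν.map Φ) :=
    fun k => ((hg₀ k).mono (𝒢₀.le k)).aestronglyMeasurable
  refine martingale_of_setIntegral_eq_succ hg₀ (fun k => ?_) fun k S hS => ?_
  · rw [integrable_map_measure (hg₀m k) hΦ.aemeasurable, hcomp]
    exact hg.integrable k
  · have hSm := 𝒢₀.le k S hS
    rw [setIntegral_map hSm (hg₀m k) hΦ.aemeasurable,
      setIntegral_map hSm (hg₀m (k+1)) hΦ.aemeasurable]
    change ∫ x in Φ ⁻¹' S, (g₀ k ∘ Φ) x ∂ν = ∫ x in Φ ⁻¹' S, (g₀ (k+1) ∘ Φ) x ∂ν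
    rw [hcomp, hcomp]
    exact hg.setIntegral_eq k.le_succ (hΦ𝒢 k hS)

theorem eLpNorm_le_of_two_smul_eq_add {α E : Type*} [NormedAddCommGroup E] [NormedSpace ℝ E]
    {m : MeasurableSpace α} {μ : Measure α} {p C : ℝ≥0∞} (hp : 1 ≤ p) {u v w : α → E}
    (hu : AEStronglyMeasurable u μ) (hv : AEStronglyMeasurable v μ) (huvw : (2:ℝ) • w = u + v)
    (hu' : eLpNorm u p μ ≤ C * eLpNorm v p μ) (hv' : eLpNorm v p μ ≤ C * eLpNorm v p μ) :
    eLpNorm w p μ ≤ C * eLpNorm v p μ := by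
  have h2 : 2 * eLpNorm w p μ ≤ 2 * (C * eLpNorm v p μ) :=
    calc 2 * eLpNorm w p μ = eLpNorm ((2:ℝ) • w) p μ := by
          rw [eLpNorm_const_smul, Real.enorm_eq_ofReal_abs]; simp
      _ = eLpNorm (u + v) p μ := by rw [huvw]
      _ ≤ eLpNorm u p μ + eLpNorm v p μ := eLpNorm_add_le hu hv hp
      _ ≤ C * eLpNorm v p μ + C * eLpNorm v p μ := add_le_add hu' hv'
      _ = 2 * (C * eLpNorm v p μ) := (two_mul _).symm
  exact (ENNReal.mul_le_mul_iff_right two_ne_zero ENNReal.ofNat_ne_top).1 h2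

theorem setIntegral_eq_of_forall_prod {Ω' Ω X : Type*} [NormedAddCommGroup X]
    [NormedSpace ℝ X]     {m₁ mΩ' : MeasurableSpace Ω'} {m₂ mΩ : MeasurableSpace Ω}
    {μ' : Measure Ω'} {μ : Measure Ω} [SFinite μ'] [SFinite μ]
    (hm₁ : m₁ ≤ mΩ') (hm₂ : m₂ ≤ mΩ) {F G : Ω' × Ω → X}
    (hF : Integrable F (μ'.prod μ)) (hG : Integrable G (μ'.prod μ))
    (h : ∀ A B, MeasurableSet[m₁] A → MeasurableSet[m₂] B →
      ∫ x in A ×ˢ B, F x ∂(μ'.prod μ) = ∫ x in A ×ˢ B, G x ∂(μ'.prod μ))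
    {S : Set (Ω' × Ω)} (hS : MeasurableSet[m₁.prod m₂] S) :
    ∫ x in S, F x ∂(μ'.prod μ) = ∫ x in S, G x ∂(μ'.prod μ) := by
  have hle : m₁.prod m₂ ≤ mΩ'.prod mΩ :=
    sup_le_sup (MeasurableSpace.comap_mono hm₁) (MeasurableSpace.comap_mono hm₂)
  have huniv : ∫ x, F x ∂(μ'.prod μ) = ∫ x, G x ∂(μ'.prod μ) := by
    simpa using h univ univ MeasurableSet.univ MeasurableSet.univ
  induction S, hS using MeasurableSpace.induction_on_inter generateFrom_prod.symm isPiSystem_prod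
    with
  | empty => simp
  | basic _ hS =>
    obtain ⟨A, hA, B, hB, rfl⟩ := hS
    exact h A B hA hB
  | compl t ht hFG =>
    rw [setIntegral_compl (hle t ht) hF, setIntegral_compl (hle t ht) hG, hFG, huniv]
  | iUnion s hdisj hs hFG =>
    rw [integral_iUnion (fun i => hle _ (hs i)) hdisj hF.integrableOn,
      integral_iUnion (fun i => hle _ (hs i)) hdisj hG.integrableOn]
    simp only [hFG]

namespace Filtration

variable {Ω' Ω β : Type*} {mΩ' : MeasurableSpace Ω'} {mΩ : MeasurableSpace Ω}

def prodAlong {a b : ℕ → ℕ} (𝒜 : Filtration ℕ mΩ') (ℬ : Filtration ℕ mΩ)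
    (ha : Monotone a) (hb : Monotone b) : Filtration ℕ (mΩ'.prod mΩ) where
  seq k := (𝒜 (a k)).prod (ℬ (b k))
  mono' _ _ hkl := sup_le_sup (MeasurableSpace.comap_mono (𝒜.mono (ha hkl)))
    (MeasurableSpace.comap_mono (ℬ.mono (hb hkl)))
  le' _ := sup_le_sup (MeasurableSpace.comap_mono (𝒜.le _)) (MeasurableSpace.comap_mono (ℬ.le _))

def past [mβ : MeasurableSpace β] (ε : ℕ → Ω → β) (hε : ∀ i, Measurable (ε i)) :
    Filtration ℕ mΩ where
  seq n := ⨆ i < n, mβ.comap (ε i)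
  mono' _ _ hnm := biSup_mono fun _ hi => hi.trans_le hnm
  le' _ := iSup₂_le fun i _ => (hε i).comap_le

theorem measurable_past [mβ : MeasurableSpace β] (ε : ℕ → Ω → β) (hε : ∀ i, Measurable (ε i))
    (i : ℕ) : Measurable[past ε hε (i+1)] (ε i) :=
  Measurable.of_comap_le (le_iSup₂ (f := fun j (_ : j < i + 1) => mβ.comap (ε j)) i i.lt_succ_self)

def fullFrom (ℱ : Filtration ℕ mΩ) (N : ℕ) : Filtration ℕ mΩ where
  seq j := if j < N then ℱ j else mΩ
  mono' j k hjk := by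
    beta_reduce
    split_ifs with hj hk hk
    exacts [ℱ.mono hjk, ℱ.le j, absurd (hjk.trans_lt hk) hj, le_rfl]
  le' j := by
    split_ifs
    exacts [ℱ.le j, le_rfl]

theorem fullFrom_of_lt (ℱ : Filtration ℕ mΩ) {N j : ℕ} (hj : j < N) : ℱ.fullFrom N j = ℱ j :=
  if_pos hj

theorem fullFrom_self (ℱ : Filtration ℕ mΩ) (N : ℕ) : ℱ.fullFrom N N = mΩ :=
  if_neg (lt_irrefl N)

end Filtration

section SumSmulCondExp

variable {Ω' Ω X : Type*} [NormedAddCommGroup X] [NormedSpace ℝ X] [CompleteSpace X]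
  {mΩ' : MeasurableSpace Ω'} {mΩ : MeasurableSpace Ω} {μ' : Measure Ω'} {μ : Measure Ω}
  [IsFiniteMeasure μ'] [IsFiniteMeasure μ] {𝒜 : Filtration ℕ mΩ'} {ℬ : Filtration ℕ mΩ}
  {ε : ℕ → Ω' → ℝ} {f : ℕ → Ω → X}

theorem setIntegral_prod_sum_smul_condExp (hεi : ∀ i, Integrable (ε i) μ')
    (hε0 : ∀ i A, MeasurableSet[𝒜 i] A → ∫ x in A, ε i x ∂μ' = 0)
    (hf : ∀ i, Integrable (f i) μ) {n n' j j' : ℕ} (hn : n ≤ n') (hj : j ≤ j')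
    {A : Set Ω'} {B : Set Ω} (hA : MeasurableSet[𝒜 n] A) (hB : MeasurableSet[ℬ j] B) :
    ∫ x in A ×ˢ B, ∑ i ∈ Finset.range n', ε i x.1 • μ[f i | ℬ j'] x.2 ∂(μ'.prod μ)
      = ∑ i ∈ Finset.range n, (∫ x in A, ε i x ∂μ') • ∫ y in B, f i y ∂μ := by
  rw [integral_finsetSum _ fun i _ => ((hεi i).smul_prod integrable_condExp).integrableOn]
  have hterm : ∀ i, ∫ x in A ×ˢ B, ε i x.1 • μ[f i | ℬ j'] x.2 ∂(μ'.prod μ)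
      = (∫ x in A, ε i x ∂μ') • ∫ y in B, f i y ∂μ := fun i => by
    rw [← Measure.prod_restrict, integral_prod_smul,
      setIntegral_condExp (ℬ.le _) (hf i) (ℬ.mono hj B hB)]
  simp only [hterm]
  refine (Finset.sum_subset (Finset.range_mono hn) fun i _ hi => ?_).symm
  rw [hε0 i A (𝒜.mono (by simpa using hi) A hA), zero_smul]

theorem martingale_sum_smul_condExp {a b : ℕ → ℕ} (ha : Monotone a) (hb : Monotone b)
    (hεm : ∀ i, StronglyMeasurable[𝒜 (i+1)] (ε i)) (hεi : ∀ i, Integrable (ε i) μ')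
    (hε0 : ∀ i A, MeasurableSet[𝒜 i] A → ∫ x in A, ε i x ∂μ' = 0)
    (hf : ∀ i, Integrable (f i) μ) :
    Martingale (fun k x => ∑ i ∈ Finset.range (a k), ε i x.1 • μ[f i | ℬ (b k)] x.2)
      (𝒜.prodAlong ℬ ha hb) (μ'.prod μ) := by
  have hint : ∀ k, Integrable
      (fun x : Ω' × Ω => ∑ i ∈ Finset.range (a k), ε i x.1 • μ[f i | ℬ (b k)] x.2) (μ'.prod μ) :=
    fun k => integrable_finsetSum _ fun i _ => (hεi i).smul_prod integrable_condExp
  refine martingale_of_setIntegral_eq_succ (fun k => ?_) hint fun k S hS => ?_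
  · refine Finset.stronglyMeasurable_fun_sum _ fun i hi => ?_
    have hε : StronglyMeasurable[𝒜 (a k)] (ε i) :=
      (hεm i).mono (𝒜.mono (Finset.mem_range.1 hi))
    exact (hε.comp_measurable (@measurable_fst _ _ (𝒜 (a k)) (ℬ (b k)))).smul
      (stronglyMeasurable_condExp.comp_measurable (@measurable_snd _ _ (𝒜 (a k)) (ℬ (b k))))
  · refine setIntegral_eq_of_forall_prod (𝒜.le _) (ℬ.le _) (hint k) (hint (k+1))
      (fun A B hA hB => ?_) hS
    rw [setIntegral_prod_sum_smul_condExp hεi hε0 hf le_rfl le_rfl hA hB,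
      setIntegral_prod_sum_smul_condExp hεi hε0 hf (ha k.le_succ) (hb k.le_succ) hA hB]

end SumSmulCondExp

end MeasureTheory

theorem sum_range_neg_one_pow_smul_add_sum_range {M : Type*} [AddCommGroup M] [Module ℝ M]
    (d : ℕ → M) (n : ℕ) :
    ∑ k ∈ Finset.range (2*n), (-1:ℝ)^k • d k + ∑ k ∈ Finset.range (2*n), d k
      = (2:ℝ) • ∑ j ∈ Finset.range n, d (2*j) := by
  rw [← Finset.sum_add_distrib]
  induction n with
  | zero => simp
  | succ n ih =>
    rw [show 2*(n+1) = 2*n+1+1 by ring, Finset.sum_range_succ, Finset.sum_range_succ, ih,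
      Finset.sum_range_succ, pow_succ, pow_mul]
    simp only [neg_one_sq, one_pow, one_smul, one_mul, neg_one_smul, smul_add]
    module

def IsUMDConstantOn (X : Type*) [NormedAddCommGroup X] [NormedSpace ℝ X] (p C : ℝ≥0∞)
    (Ω : Type*) [MeasurableSpace Ω] : Prop :=
  ∀ (ν : Measure Ω) [IsProbabilityMeasure ν] (𝒢 : Filtration ℕ ‹MeasurableSpace Ω›)
    (g : ℕ → Ω → X), Martingale g 𝒢 ν → ∀ σ : ℕ → ℝ, (∀ k, σ k = 1 ∨ σ k = -1) → ∀ N : ℕ,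
    eLpNorm (∑ k ∈ Finset.range N, σ k • (g (k+1) - g k)) p ν
      ≤ C * eLpNorm (∑ k ∈ Finset.range N, (g (k+1) - g k)) p ν

namespace IsUMDConstantOn

variable {X : Type*} [NormedAddCommGroup X] [NormedSpace ℝ X] {p C : ℝ≥0∞}

theorem of_forall_type [CompleteSpace X]
    (h : ∀ (Ω₀ : Type) [MeasurableSpace Ω₀], IsUMDConstantOn X p C Ω₀)
    (Ω : Type*) [MeasurableSpace Ω] : IsUMDConstantOn X p C Ω := by
  intro ν _ 𝒢 g hg σ hσ N
  choose e he ψ hψ hgψ using fun k =>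
    (hg.stronglyAdapted k).exists_eq_stronglyMeasurable_comp_nat
  let Φ : Ω → ℕ → ℕ → ℕ := fun ω k => e k ω
  let g₀ : ℕ → (ℕ → ℕ → ℕ) → X := fun k s => ψ k (s k)
  have hcomp : ∀ k, g₀ k ∘ Φ = g k := fun k => (hgψ k).symm
  have hΦ : Measurable Φ := measurable_pi_lambda _ fun k => (he k).mono (𝒢.le k) le_rfl
  have hΦ𝒢 : ∀ k, Measurable[𝒢 k, Filtration.piLE k] Φ := by
    rintro k _ ⟨T, hT, rfl⟩
    have hek : ∀ j : Iic k, Measurable[𝒢 k] (e j) :=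
      fun j => (he j).mono (𝒢.mono (mem_Iic.1 j.2)) le_rfl
    exact @measurable_pi_lambda _ _ _ (𝒢 k) _ (fun ω (j : Iic k) => e j ω) hek _ hT
  have hg₀ : StronglyAdapted Filtration.piLE g₀ :=
    fun k => (hψ k).comp_measurable (Filtration.measurable_piLE_apply k)
  have := Measure.isProbabilityMeasure_map (μ := ν) hΦ.aemeasurable
  have hg₀m : ∀ k, AEStronglyMeasurable (g₀ k) (ν.map Φ) :=
    fun k => ((hg₀ k).mono (Filtration.piLE.le k)).aestronglyMeasurable
  have hd : ∀ k, AEStronglyMeasurable (g₀ (k+1) - g₀ k) (ν.map Φ) :=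
    fun k => (hg₀m _).sub (hg₀m _)
  have hσd := Finset.aestronglyMeasurable_sum (Finset.range N) fun k _ => (hd k).const_smul (σ k)
  have hd' := Finset.aestronglyMeasurable_sum (Finset.range N) fun k _ => hd k
  have key := h _ (ν.map Φ) _ g₀ (hg.of_comp hΦ hΦ𝒢 hg₀ hcomp) σ hσ N
  rw [eLpNorm_map_measure hσd hΦ.aemeasurable, eLpNorm_map_measure hd' hΦ.aemeasurable] at key
  convert key using 3 <;> ext ω <;> simp [← hcomp]

theorem eLpNorm_sum_even_increments_le {Ω : Type*} [MeasurableSpace Ω]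
    (hC : IsUMDConstantOn X p C Ω) (hp : 1 ≤ p) {ν : Measure Ω} [IsProbabilityMeasure ν]
    {𝒢 : Filtration ℕ ‹MeasurableSpace Ω›} {g : ℕ → Ω → X} (hg : Martingale g 𝒢 ν) (n : ℕ) :
    eLpNorm (∑ j ∈ Finset.range n, (g (2*j+1) - g (2*j))) p ν
      ≤ C * eLpNorm (g (2*n) - g 0) p ν := by
  have hgm : ∀ k, AEStronglyMeasurable (g k) ν :=
    fun k => ((hg.stronglyAdapted k).mono (𝒢.le k)).aestronglyMeasurable
  have hd : ∀ k, AEStronglyMeasurable (g (k+1) - g k) ν := fun k => (hgm _).sub (hgm _)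
  rw [← Finset.sum_range_sub]
  exact eLpNorm_le_of_two_smul_eq_add hp
    (Finset.aestronglyMeasurable_sum _ fun k _ => (hd k).const_smul _)
    (Finset.aestronglyMeasurable_sum _ fun k _ => hd k)
    (sum_range_neg_one_pow_smul_add_sum_range (fun k => g (k+1) - g k) n).symm
    (hC ν 𝒢 g hg _ (neg_one_pow_eq_or ℝ) _)
    (by simpa using hC ν 𝒢 g hg 1 (fun _ => Or.inl rfl) _)

end IsUMDConstantOn

namespace ProbabilityTheory

variable {Ω : Type*} {mΩ : MeasurableSpace Ω} {μ : Measure Ω}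

theorem integral_eq_zero_of_symmetric_sign [IsProbabilityMeasure μ] {Y : Ω → ℝ}
    (hY : Measurable Y) (hval : ∀ ω, Y ω = 1 ∨ Y ω = -1) (hhalf : μ {ω | Y ω = 1} = 1/2) :
    ∫ ω, Y ω ∂μ = 0 := by
  set E := {ω | Y ω = 1}
  have hE : MeasurableSet E := hY (measurableSet_singleton 1)
  calc ∫ ω, Y ω ∂μ = ∫ ω, (2 * E.indicator 1 ω - 1) ∂μ := by
        refine integral_congr_ae (ae_of_all _ fun ω => ?_)
        rcases hval ω with h | h <;> norm_num [E, h, Set.indicator]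
    _ = 2 * μ.real E - 1 := by
        rw [integral_sub ((integrable_const 1).indicator hE |>.const_mul 2) (integrable_const 1),
          integral_const_mul, integral_indicator_one hE]
        simp
    _ = 0 := by simp [Measure.real, hhalf]

theorem setIntegral_past_eq_zero [IsFiniteMeasure μ] {ε : ℕ → Ω → ℝ}
    (hε : ∀ i, Measurable (ε i)) (hind : iIndepFun ε μ) {i : ℕ} (hint : Integrable (ε i) μ)
    (hmean : ∫ ω, ε i ω ∂μ = 0)
    {A : Set Ω} (hA : MeasurableSet[Filtration.past ε hε i] A) : ∫ ω in A, ε i ω ∂μ = 0 := by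
  have hindep : Indep (MeasurableSpace.comap (ε i) inferInstance) (Filtration.past ε hε i) μ := by
    have := indep_iSup_of_disjoint (fun j => (hε j).comap_le)
      ((iIndepFun_iff_iIndep _ _ _).1 hind) (S := {i}) (T := Iio i) (by simp)
    simp only [mem_singleton_iff, iSup_iSup_eq_left, mem_Iio] at this
    exact this
  have hcond := condExp_indep_eq (hε i).comap_le (Filtration.le _ i)
    (Measurable.of_comap_le le_rfl).stronglyMeasurable hindep
  rw [← setIntegral_condExp (Filtration.le _ i) hint hA,
    integral_congr_ae (ae_restrict_of_ae hcond), hmean, integral_zero]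

section Stein

variable {Ω' X : Type*} [NormedAddCommGroup X] [NormedSpace ℝ X] {mΩ' : MeasurableSpace Ω'}
  {ε : ℕ → Ω' → ℝ} {f : ℕ → Ω → X} {ℬ : Filtration ℕ mΩ}

noncomputable def steinProcess (μ : Measure Ω) (ε : ℕ → Ω' → ℝ) (f : ℕ → Ω → X)
    (ℬ : Filtration ℕ mΩ) (k : ℕ) (x : Ω' × Ω) : X :=
  ∑ i ∈ Finset.range ((k+1)/2), ε i x.1 • μ[f i | ℬ (k/2)] x.2

theorem steinProcess_zero : steinProcess μ ε f ℬ 0 = 0 := by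
  ext x
  simp [steinProcess]

theorem steinProcess_two_mul (n : ℕ) :
    steinProcess μ ε f ℬ (2*n) = fun x => ∑ i ∈ Finset.range n, ε i x.1 • μ[f i | ℬ n] x.2 := by
  ext x
  rw [steinProcess, show (2*n+1)/2 = n by omega, show 2*n/2 = n by omega]

theorem steinProcess_two_mul_add_one_sub (j : ℕ) :
    steinProcess μ ε f ℬ (2*j+1) - steinProcess μ ε f ℬ (2*j)
      = fun x => ε j x.1 • μ[f j | ℬ j] x.2 := by
  ext x
  simp only [Pi.sub_apply, steinProcess, show (2*j+1+1)/2 = j+1 by omega,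
    show (2*j+1)/2 = j by omega, show 2*j/2 = j by omega, Finset.sum_range_succ,
    add_sub_cancel_left]

end Stein

end ProbabilityTheory

/-- Stein's inequality in UMD spaces: if `βc` is a UMD constant of `X` for
exponent `p` (unconditionality of martingale differences over arbitrary probability spaces),
`(ℱ_j)` is a filtration on a probability space `(Ω, μ)`, `f_1, …, f_N ∈ L^p(Ω; X)`, and
`(ε_j)` are independent symmetric `±1`-valued random variables on another probability space
`(Ω', μ')`, then `‖Σ_j ε_j E_j f_j‖_p ≤ βc ‖Σ_j ε_j f_j‖_p`, the norms being taken in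
`L^p(Ω' × Ω; X)`. -/
theorem statement11
    {X : Type*} [NormedAddCommGroup X] [NormedSpace ℝ X] [CompleteSpace X]
    (p : ℝ≥0∞) (hp : 1 < p)
    (βc : ℝ)
    -- `βc` is a UMD constant of `X`: unconditionality of martingale differences in `L^p`
    (hβ : ∀ (Ω₀ : Type) [MeasurableSpace Ω₀], ∀ (ν : Measure Ω₀) [IsProbabilityMeasure ν]
        (𝒢 : Filtration ℕ (by infer_instance : MeasurableSpace Ω₀))
        (g : ℕ → Ω₀ → X), Martingale g 𝒢 ν →
        ∀ (σ : ℕ → ℝ), (∀ k, σ k = 1 ∨ σ k = -1) → ∀ N : ℕ,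
        eLpNorm (∑ k ∈ Finset.range N, σ k • (g (k+1) - g k)) p ν
          ≤ ENNReal.ofReal βc * eLpNorm (∑ k ∈ Finset.range N, (g (k+1) - g k)) p ν)
    {Ω : Type*} [MeasurableSpace Ω] (μ : Measure Ω) [IsProbabilityMeasure μ]
    (ℱ : Filtration ℕ (inferInstance : MeasurableSpace Ω))
    (f : ℕ → Ω → X) (hf : ∀ j, MemLp (f j) p μ)
    {Ω' : Type*} [MeasurableSpace Ω'] (μ' : Measure Ω') [IsProbabilityMeasure μ']
    (ε : ℕ → Ω' → ℝ) (hεmeas : ∀ j, Measurable (ε j))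
    (hεval : ∀ j ω', ε j ω' = 1 ∨ ε j ω' = -1)
    (hεsym : ∀ j, μ' {ω' | ε j ω' = 1} = 1/2)
    (hεindep : iIndepFun ε μ')
    (N : ℕ) :
    eLpNorm (fun ω : Ω' × Ω =>
        ∑ j ∈ Finset.range N, ε j ω.1 • (μ[f j | ℱ j]) ω.2) p (μ'.prod μ)
      ≤ ENNReal.ofReal βc *
        eLpNorm (fun ω : Ω' × Ω =>
          ∑ j ∈ Finset.range N, ε j ω.1 • f j ω.2) p (μ'.prod μ) := by
  have hεint : ∀ i, Integrable (ε i) μ' := fun i =>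
    Integrable.of_bound (hεmeas i).aestronglyMeasurable 1
      (ae_of_all _ fun ω => by rcases hεval i ω with h | h <;> simp [h])
  have hεmean : ∀ i, ∫ ω, ε i ω ∂μ' = 0 :=
    fun i => integral_eq_zero_of_symmetric_sign (hεmeas i) (hεval i) (hεsym i)
  have ha : Monotone fun k : ℕ => (k+1)/2 := fun _ _ h => Nat.div_le_div_right (by omega)
  have hb : Monotone fun k : ℕ => k/2 := fun _ _ h => Nat.div_le_div_right h
  have hmart : Martingale (steinProcess μ ε f (ℱ.fullFrom N))
      ((Filtration.past ε hεmeas).prodAlong (ℱ.fullFrom N) ha hb) (μ'.prod μ) :=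
    martingale_sum_smul_condExp ha hb
      (fun i => (Filtration.measurable_past ε hεmeas i).stronglyMeasurable) hεint
      (fun i _ hA => setIntegral_past_eq_zero hεmeas hεindep (hεint i) (hεmean i) hA)
      (fun i => (hf i).integrable hp.le)
  have hcond : ∀ i, μ[f i | ℱ.fullFrom N N] =ᵐ[μ] f i := fun i => by
    rw [Filtration.fullFrom_self]
    exact condExp_of_aestronglyMeasurable' le_rfl (hf i).1 ((hf i).integrable hp.le)
  calc _ = eLpNorm (∑ j ∈ Finset.range N, (steinProcess μ ε f (ℱ.fullFrom N) (2*j+1)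
          - steinProcess μ ε f (ℱ.fullFrom N) (2*j))) p (μ'.prod μ) := by
        congr 1
        ext x
        simp only [steinProcess_two_mul_add_one_sub, Finset.sum_apply]
        exact Finset.sum_congr rfl fun j hj => by
          rw [ℱ.fullFrom_of_lt (Finset.mem_range.1 hj)]
    _ ≤ ENNReal.ofReal βc * eLpNorm (steinProcess μ ε f (ℱ.fullFrom N) (2*N)
          - steinProcess μ ε f (ℱ.fullFrom N) 0) p (μ'.prod μ) :=
        (IsUMDConstantOn.of_forall_type (fun Ω₀ _ => hβ Ω₀) _).eLpNorm_sum_even_increments_le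
          hp.le hmart N
    _ = _ := by
        rw [steinProcess_zero, sub_zero, steinProcess_two_mul]
        congr 1
        refine eLpNorm_congr_ae ?_
        filter_upwards [(Filter.eventually_all_finset _).2 fun i _ =>
          (measurePreserving_snd (μ := μ') (ν := μ)).quasiMeasurePreserving.ae (hcond i)]
          with x hx
        exact Finset.sum_congr rfl fun i hi => by rw [hx i hi]
end
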